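/- arXiv:2003.07772 — 4 statements merged into one kernel-verified Lean document; each statement's English description precedes it below -/
import Mathlib

section
/- Let n ≥ 1 and let Φ : Matrix (Fin n) (Fin n) ℂ → Matrix (Fin n) (Fin n) ℂ be a ℂ-linear map. Then Φ is positive (i.e., Φ(X) is positive semidefinite for every positive semidefinite X) if and only if the Choi matrix J(Φ) is block positive. -/
/-!
The block-positivity form `⟨x ⊗ y, J(Φ) (x ⊗ y)⟩` equals `⟨y, Φ(x̄ xᵀ) y⟩`, the quadratic form of
`Φ` applied to the rank-one positive matrix `x̄ xᵀ`. Over `ℂ` a matrix is positive semidefinite as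
soon as its quadratic form is nonnegative (polarization gives hermiticity), and every positive
semidefinite matrix is a sum of rank-one ones, so `Φ` is positive iff it is positive on rank-one
matrices, i.e. iff `J(Φ)` is block positive.
-/

open Matrix ComplexOrder

open scoped InnerProductSpace in
theorem LinearMap.isPositive_of_inner_map_self_nonneg {E : Type*} [NormedAddCommGroup E]
    [InnerProductSpace ℂ E] {T : E →ₗ[ℂ] E} (h : ∀ x, 0 ≤ ⟪T x, x⟫_ℂ) : T.IsPositive :=
  T.isPositive_iff.2 ⟨(isSymmetric_iff_inner_map_self_real T).2 fun x => (h x).isSelfAdjoint, h⟩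

theorem Matrix.posSemidef_iff_dotProduct_mulVec_nonneg_complex {ι : Type*} [Fintype ι]
    {M : Matrix ι ι ℂ} : M.PosSemidef ↔ ∀ y, 0 ≤ star y ⬝ᵥ (M *ᵥ y) := by
  classical
  refine ⟨PosSemidef.dotProduct_mulVec_nonneg, fun h => ?_⟩
  rw [← isPositive_toEuclideanLin_iff]
  refine LinearMap.isPositive_of_inner_map_self_nonneg fun v => ?_
  rw [EuclideanSpace.inner_eq_star_dotProduct, dotProduct_comm, ← star_nonneg_iff, star_dotProduct,
    star_star]
  simpa using h v.ofLp

theorem forall_posSemidef_map_iff_forall_vecMulVec {ι κ 𝕜 : Type*} [Fintype ι] [RCLike 𝕜]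
    (Φ : Matrix ι ι 𝕜 →ₗ[𝕜] Matrix κ κ 𝕜) :
    (∀ X, X.PosSemidef → (Φ X).PosSemidef) ↔ ∀ x, (Φ (vecMulVec (star x) x)).PosSemidef := by
  refine ⟨fun h x => h _ (posSemidef_vecMulVec_star_self x), fun h X hX => ?_⟩
  obtain ⟨m, v, rfl⟩ := posSemidef_iff_eq_sum_vecMulVec.mp hX
  rw [map_sum]
  exact posSemidef_sum _ fun i _ => by simpa using h (star (v i))

theorem dotProduct_mulVec_map_vecMulVec {ι κ R : Type*} [Fintype ι] [DecidableEq ι] [Fintype κ]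
    [CommSemiring R] [StarRing R] (Φ : Matrix ι ι R →ₗ[R] Matrix κ κ R) (x : ι → R) (y : κ → R) :
    star y ⬝ᵥ Φ (vecMulVec (star x) x) *ᵥ y =
      ∑ k, ∑ l, ∑ i, ∑ j, starRingEnd R (x k * y l) * Φ (single k i 1) l j * x i * y j := by
  have expand : vecMulVec (star x) x = ∑ k, ∑ i, (star (x k) * x i) • single k i 1 := by
    conv_lhs => rw [matrix_eq_sum_single (vecMulVec _ _)]
    simp only [smul_single, smul_eq_mul, mul_one, vecMulVec_apply, Pi.star_apply]
  simp only [expand, map_sum, map_smul, dotProduct, mulVec, Matrix.sum_apply,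
    Matrix.smul_apply, Finset.mul_sum, Finset.sum_mul]
  conv_rhs => rw [Finset.sum_comm]
  refine Finset.sum_congr rfl fun l _ => ?_
  rw [← Finset.sum_comm_cycle]
  refine Finset.sum_congr rfl fun k _ => Finset.sum_congr rfl fun i _ =>
    Finset.sum_congr rfl fun j _ => ?_
  simp only [Pi.star_apply, smul_eq_mul, starRingEnd_apply, star_mul']
  ring

theorem positive_iff_choi_blockPositive_general (n : ℕ)
    (Φ : Matrix (Fin n) (Fin n) ℂ →ₗ[ℂ] Matrix (Fin n) (Fin n) ℂ) :
    (∀ X : Matrix (Fin n) (Fin n) ℂ, X.PosSemidef → (Φ X).PosSemidef) ↔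
    (∀ x y : Fin n → ℂ,
      0 ≤ ∑ k : Fin n, ∑ l : Fin n, ∑ i : Fin n, ∑ j : Fin n,
        (starRingEnd ℂ) (x k * y l) *
          (Φ (Matrix.single k i 1) l j) * x i * y j) := by
  rw [forall_posSemidef_map_iff_forall_vecMulVec]
  simp only [posSemidef_iff_dotProduct_mulVec_nonneg_complex, dotProduct_mulVec_map_vecMulVec]

/-- A ℂ-linear map `Φ` on `Matrix (Fin n) (Fin n) ℂ` is positive
(maps positive semidefinite matrices to positive semidefinite matrices) if and only if
its Choi matrix `J(Φ)`, with entries `J(Φ)_{(i,k),(j,l)} = (Φ(E_{ij}))_{k,l}`, is block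
positive, i.e. `⟨x ⊗ y, J(Φ) (x ⊗ y)⟩` is a nonnegative real number for all `x y : ℂⁿ`.
Here `0 ≤ z` in `ℂ` means `z` is real and nonnegative. -/
theorem positive_iff_choi_blockPositive (n : ℕ) (hn : 1 ≤ n)
    (Φ : Matrix (Fin n) (Fin n) ℂ →ₗ[ℂ] Matrix (Fin n) (Fin n) ℂ) :
    (∀ X : Matrix (Fin n) (Fin n) ℂ, X.PosSemidef → (Φ X).PosSemidef) ↔
    (∀ x y : Fin n → ℂ,
      0 ≤ ∑ k : Fin n, ∑ l : Fin n, ∑ i : Fin n, ∑ j : Fin n,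
        (starRingEnd ℂ) (x k * y l) *
          (Φ (Matrix.single k i 1) l j) * x i * y j) :=
  positive_iff_choi_blockPositive_general n Φ
end

section
/- Let n ≥ 1 and let M : Matrix (Fin n × Fin n) (Fin n × Fin n) ℂ be Hermitian. Then there exists a real multivariate polynomial p in 4n variables (p ∈ MvPolynomial (Fin n ⊕ Fin n ⊕ Fin n ⊕ Fin n) ℝ) that is homogeneous of degree 4, such that: (i) for all a, b, c, d ∈ ℝⁿ, the evaluation of p at (a, b, c, d) equals the real number Σ_{i,j,k,l} M_{(k,l),(i,j)} · conj(x_k · y_l) · x_i · y_j where x_r = a_r + i·b_r and y_s = c_s + i·d_s (this complex number is real since M is Hermitian); and (ii) M is block positive if and only if p evaluates to a nonnegative real number at every point of ℝ^{4n}. -/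
/-!
Writing `x = a + i b` and `y = c + i d`, the form `⟨x ⊗ y, M (x ⊗ y)⟩` is a complex polynomial,
homogeneous of degree 4, in the real coordinates `(a, b, c, d)`. For Hermitian `M` its values are
real, so the polynomial obtained by taking the real part of every coefficient has the same values.
Block positivity is then nonnegativity of this real polynomial, because every pair `(x, y)` comes
from some `(a, b, c, d)`.
-/

open Matrix ComplexOrder

namespace MvPolynomial

variable {σ R S : Type*}

theorem IsHomogeneous.addMonoidAlgebraMap [CommSemiring R] [CommSemiring S] {Q : MvPolynomial σ R}
    {m : ℕ} (hQ : Q.IsHomogeneous m) (g : R →+ S) :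
    IsHomogeneous (σ := σ) (AddMonoidAlgebra.map g Q) m := fun d hd =>
  hQ fun h => hd (by rw [coeff_addMonoidAlgebraMap, h, map_zero])

theorem eval_addMonoidAlgebraMap_linearMap [CommSemiring R] [CommSemiring S] [Algebra R S]
    (g : S →ₗ[R] R) (Q : MvPolynomial σ S) (w : σ → R) :
    eval w (AddMonoidAlgebra.map g.toAddMonoidHom Q) = g (eval (algebraMap R S ∘ w) Q) := by
  induction Q using induction_on' with
  | monomial d c =>
    change eval w (AddMonoidAlgebra.map _ (AddMonoidAlgebra.single d c)) = _
    rw [AddMonoidAlgebra.map_single]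
    change eval w (monomial d (g c)) = g (eval _ (monomial d c))
    simp only [eval_monomial, Function.comp_apply, ← map_pow]
    rw [← map_finsuppProd, ← Algebra.commutes, ← Algebra.smul_def, map_smul, smul_eq_mul, mul_comm]
  | add p q hp hq => rw [AddMonoidAlgebra.map_add, map_add, map_add, map_add, hp, hq]

end MvPolynomial

theorem Sum.forall_elim {α β γ : Type*} {P : (α ⊕ β → γ) → Prop} :
    (∀ v, P v) ↔ ∀ a b, P (Sum.elim a b) :=
  ⟨fun h _ _ => h _, fun h v => Sum.elim_comp_inl_inr v ▸ h _ _⟩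

theorem Complex.forall_re_add_im {ι : Type*} {P : (ι → ℂ) → Prop} :
    (∀ x, P x) ↔ ∀ a b : ι → ℝ, P fun k => a k + b k * I :=
  ⟨fun h _ _ => h _, fun h x => by
    simpa only [re_add_im] using h (fun k => (x k).re) (fun k => (x k).im)⟩

section BlockForm

variable {ι κ : Type*} [Fintype ι] [Fintype κ]

def blockForm (M : Matrix (ι × κ) (ι × κ) ℂ) (x : ι → ℂ) (y : κ → ℂ) : ℂ :=
  star (fun p : ι × κ => x p.1 * y p.2) ⬝ᵥ M *ᵥ fun p => x p.1 * y p.2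

variable (M : Matrix (ι × κ) (ι × κ) ℂ) (x : ι → ℂ) (y : κ → ℂ)

theorem blockForm_eq_sum_sum : blockForm M x y =
    ∑ p, ∑ q, starRingEnd ℂ (x p.1 * y p.2) * M p q * (x q.1 * y q.2) := by
  simp only [blockForm, dotProduct, mulVec, Finset.mul_sum, Pi.star_apply, Complex.star_def,
    mul_assoc]

theorem blockForm_eq_sum_sum_sum_sum : blockForm M x y =
    ∑ k, ∑ l, ∑ i, ∑ j, starRingEnd ℂ (x k * y l) * M (k, l) (i, j) * x i * y j := by
  simp only [blockForm_eq_sum_sum, Fintype.sum_prod_type, mul_assoc]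

theorem blockForm_eq_sum_sum_sum_sum' : blockForm M x y =
    ∑ i, ∑ j, ∑ k, ∑ l, M (k, l) (i, j) * starRingEnd ℂ (x k * y l) * x i * y j := by
  rw [blockForm_eq_sum_sum, Finset.sum_comm]
  simp only [Fintype.sum_prod_type]
  exact Finset.sum_congr rfl fun _ _ => Finset.sum_congr rfl fun _ _ =>
    Finset.sum_congr rfl fun _ _ => Finset.sum_congr rfl fun _ _ => by ring

variable {M}

theorem Matrix.IsHermitian.im_blockForm (hM : M.IsHermitian) : (blockForm M x y).im = 0 :=
  hM.im_star_dotProduct_mulVec_self _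

theorem Matrix.IsHermitian.ofReal_re_blockForm (hM : M.IsHermitian) :
    ((blockForm M x y).re : ℂ) = blockForm M x y :=
  Complex.ext rfl (by rw [Complex.ofReal_im, hM.im_blockForm])

theorem Matrix.IsHermitian.blockForm_nonneg_iff (hM : M.IsHermitian) :
    0 ≤ blockForm M x y ↔ 0 ≤ (blockForm M x y).re := by
  rw [← hM.ofReal_re_blockForm, Complex.zero_le_real, Complex.ofReal_re]

end BlockForm

namespace MvPolynomial

variable {σ : Type*}

noncomputable def complexCoord (r s : σ) : MvPolynomial σ ℂ := X r + C Complex.I * X s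

noncomputable def conjComplexCoord (r s : σ) : MvPolynomial σ ℂ := X r - C Complex.I * X s

variable (w : σ → ℝ) (r s : σ)

theorem eval_complexCoord :
    eval (fun t => (w t : ℂ)) (complexCoord r s) = w r + w s * Complex.I := by
  simp only [complexCoord, map_add, map_mul, eval_X, eval_C, mul_comm]

theorem eval_conjComplexCoord :
    eval (fun t => (w t : ℂ)) (conjComplexCoord r s) = starRingEnd ℂ (w r + w s * Complex.I) := by
  simp only [conjComplexCoord, map_sub, map_add, map_mul, eval_X, eval_C, Complex.conj_ofReal,
    Complex.conj_I]
  ring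

theorem isHomogeneous_complexCoord : (complexCoord r s).IsHomogeneous 1 :=
  (isHomogeneous_X ℂ r).add ((isHomogeneous_C _ _).mul (isHomogeneous_X ℂ s))

theorem isHomogeneous_conjComplexCoord : (conjComplexCoord r s).IsHomogeneous 1 :=
  (isHomogeneous_X ℂ r).sub ((isHomogeneous_C _ _).mul (isHomogeneous_X ℂ s))

end MvPolynomial

section BlockPositivityPoly

open MvPolynomial Sum

variable {ι κ : Type*} [Fintype ι] [Fintype κ] (M : Matrix (ι × κ) (ι × κ) ℂ)

noncomputable def blockFormPoly : MvPolynomial (ι ⊕ ι ⊕ κ ⊕ κ) ℂ :=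
  ∑ k, ∑ l, ∑ i, ∑ j,
    conjComplexCoord (inl k) (inr (inl k)) *
      conjComplexCoord (inr (inr (inl l))) (inr (inr (inr l))) *
      C (M (k, l) (i, j)) *
      complexCoord (inl i) (inr (inl i)) *
      complexCoord (inr (inr (inl j))) (inr (inr (inr j)))

theorem isHomogeneous_blockFormPoly : (blockFormPoly M).IsHomogeneous 4 :=
  IsHomogeneous.sum _ _ _ fun _ _ => IsHomogeneous.sum _ _ _ fun _ _ =>
    IsHomogeneous.sum _ _ _ fun _ _ => IsHomogeneous.sum _ _ _ fun _ _ =>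
      ((((isHomogeneous_conjComplexCoord _ _).mul (isHomogeneous_conjComplexCoord _ _)).mul
        (isHomogeneous_C _ _)).mul (isHomogeneous_complexCoord _ _)).mul
        (isHomogeneous_complexCoord _ _)

theorem eval_blockFormPoly (a b : ι → ℝ) (c d : κ → ℝ) :
    eval (fun t => ((Sum.elim a (Sum.elim b (Sum.elim c d)) t : ℝ) : ℂ)) (blockFormPoly M) =
      blockForm M (fun k => a k + b k * Complex.I) (fun l => c l + d l * Complex.I) := by
  simp only [blockFormPoly, blockForm_eq_sum_sum_sum_sum, map_sum, map_mul, eval_C,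
    eval_complexCoord, eval_conjComplexCoord, Sum.elim_inl, Sum.elim_inr]

/-- Real parts of the coefficients of `blockFormPoly M`; `MvPolynomial.map` does not apply
because `Complex.re` is only `ℝ`-linear. -/
noncomputable def blockPositivityPoly : MvPolynomial (ι ⊕ ι ⊕ κ ⊕ κ) ℝ :=
  AddMonoidAlgebra.map Complex.reLm.toAddMonoidHom (blockFormPoly M)

theorem isHomogeneous_blockPositivityPoly : (blockPositivityPoly M).IsHomogeneous 4 :=
  (isHomogeneous_blockFormPoly M).addMonoidAlgebraMap _

theorem eval_blockPositivityPoly (a b : ι → ℝ) (c d : κ → ℝ) :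
    eval (Sum.elim a (Sum.elim b (Sum.elim c d))) (blockPositivityPoly M) =
      (blockForm M (fun k => a k + b k * Complex.I) (fun l => c l + d l * Complex.I)).re := by
  rw [blockPositivityPoly, eval_addMonoidAlgebraMap_linearMap, ← eval_blockFormPoly]
  rfl

end BlockPositivityPoly

theorem exists_positivity_polynomial_general (n : ℕ)
    (M : Matrix (Fin n × Fin n) (Fin n × Fin n) ℂ) (hM : M.IsHermitian) :
    ∃ p : MvPolynomial (Fin n ⊕ Fin n ⊕ Fin n ⊕ Fin n) ℝ,
      p.IsHomogeneous 4 ∧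
      (∀ a b c d : Fin n → ℝ,
        ((MvPolynomial.eval (Sum.elim a (Sum.elim b (Sum.elim c d))) p : ℝ) : ℂ)
          = ∑ i : Fin n, ∑ j : Fin n, ∑ k : Fin n, ∑ l : Fin n,
              M (k, l) (i, j) *
                (starRingEnd ℂ) (((a k : ℂ) + (b k : ℂ) * Complex.I) *
                  ((c l : ℂ) + (d l : ℂ) * Complex.I)) *
                ((a i : ℂ) + (b i : ℂ) * Complex.I) *
                ((c j : ℂ) + (d j : ℂ) * Complex.I)) ∧
      ((∀ x y : Fin n → ℂ,
          0 ≤ ∑ k : Fin n, ∑ l : Fin n, ∑ i : Fin n, ∑ j : Fin n,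
            (starRingEnd ℂ) (x k * y l) * M (k, l) (i, j) * x i * y j) ↔
        (∀ v : (Fin n ⊕ Fin n ⊕ Fin n ⊕ Fin n) → ℝ,
          0 ≤ MvPolynomial.eval v p)) := by
  refine ⟨blockPositivityPoly M, isHomogeneous_blockPositivityPoly M, fun a b c d => ?_, ?_⟩
  · rw [eval_blockPositivityPoly, hM.ofReal_re_blockForm, blockForm_eq_sum_sum_sum_sum']
  · simp only [← blockForm_eq_sum_sum_sum_sum, hM.blockForm_nonneg_iff, Complex.forall_re_add_im,
      Sum.forall_elim, eval_blockPositivityPoly]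

/-- For a Hermitian matrix `M` indexed by `Fin n × Fin n`, there exists a
real multivariate polynomial `p` in `4n` variables, homogeneous of degree 4, such that
(i) for all `a b c d : ℝⁿ`, the evaluation of `p` at `(a,b,c,d)` equals (after coercion
to `ℂ`) the number `Σ_{i,j,k,l} M_{(k,l),(i,j)} · conj(x_k·y_l) · x_i · y_j` where
`x_r = a_r + i·b_r` and `y_s = c_s + i·d_s`, and (ii) `M` is block positive if and only
if `p` is nonnegative at every point of `ℝ^{4n}`. -/
theorem exists_positivity_polynomial (n : ℕ) (hn : 1 ≤ n)
    (M : Matrix (Fin n × Fin n) (Fin n × Fin n) ℂ) (hM : M.IsHermitian) :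
    ∃ p : MvPolynomial (Fin n ⊕ Fin n ⊕ Fin n ⊕ Fin n) ℝ,
      p.IsHomogeneous 4 ∧
      (∀ a b c d : Fin n → ℝ,
        ((MvPolynomial.eval (Sum.elim a (Sum.elim b (Sum.elim c d))) p : ℝ) : ℂ)
          = ∑ i : Fin n, ∑ j : Fin n, ∑ k : Fin n, ∑ l : Fin n,
              M (k, l) (i, j) *
                (starRingEnd ℂ) (((a k : ℂ) + (b k : ℂ) * Complex.I) *
                  ((c l : ℂ) + (d l : ℂ) * Complex.I)) *
                ((a i : ℂ) + (b i : ℂ) * Complex.I) *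
                ((c j : ℂ) + (d j : ℂ) * Complex.I)) ∧
      ((∀ x y : Fin n → ℂ,
          0 ≤ ∑ k : Fin n, ∑ l : Fin n, ∑ i : Fin n, ∑ j : Fin n,
            (starRingEnd ℂ) (x k * y l) * M (k, l) (i, j) * x i * y j) ↔
        (∀ v : (Fin n ⊕ Fin n ⊕ Fin n ⊕ Fin n) → ℝ,
          0 ≤ MvPolynomial.eval v p)) :=
  exists_positivity_polynomial_general n M hM
end

section
/- (Sturm–Tarski / generalized Sturm theorem) Let f, g ∈ ℝ[X] be nonzero polynomials with f nonconstant (so f'·g ≠ 0). Then ν(f, f'·g) = N(f, g), where f' is the formal derivative of f. -/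
/-- The canonical (generalized Sturm) sequence for `p` and `q`:
`h₀ = p`, `h₁ = q`, `h_{k+2} = −(h_k mod h_{k+1})` (remainder of polynomial division). -/
noncomputable def sturmAux (p q : Polynomial ℝ) : ℕ → Polynomial ℝ
  | 0 => p
  | 1 => q
  | k + 2 => -(sturmAux p q k % sturmAux p q (k + 1))

/-- `σ_{+∞}(h) = +` : `h(x) > 0` for all sufficiently large real `x`. -/
def sigmaTop (h : Polynomial ℝ) : Prop := ∀ᶠ x in Filter.atTop, 0 < h.eval x

/-- `σ_{−∞}(h) = +` : `h(x) > 0` for all sufficiently negative real `x`. -/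
def sigmaBot (h : Polynomial ℝ) : Prop := ∀ᶠ x in Filter.atBot, 0 < h.eval x

/-- The number of sign changes (with respect to the sign function `σ`) in the tuple
`(S 0, S 1, …, S m)`: the number of consecutive pairs with different signs. -/
noncomputable def signChanges (S : ℕ → Polynomial ℝ) (m : ℕ)
    (σ : Polynomial ℝ → Prop) : ℕ :=
  {i : ℕ | i < m ∧ ¬ (σ (S i) ↔ σ (S (i + 1)))}.ncard

/-- `ν(p,q)` computed on the canonical Sturm sequence
`(h₀/h_m, h₁/h_m, …, h_m/h_m = 1)` (where `m` is the stopping index of the canonical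
sequence): the number of sign changes at `−∞` minus the number of sign changes
at `+∞`. -/
noncomputable def sturmNu (p q : Polynomial ℝ) (m : ℕ) : ℤ :=
  (signChanges (fun i => sturmAux p q i / sturmAux p q m) m sigmaBot : ℤ)
    - (signChanges (fun i => sturmAux p q i / sturmAux p q m) m sigmaTop : ℤ)

/-- `N(f,g)`: the number of real roots of `f` at which `g` is positive minus the number
of real roots of `f` at which `g` is negative. -/
noncomputable def sturmN (f g : Polynomial ℝ) : ℤ :=
  ({x : ℝ | f.eval x = 0 ∧ 0 < g.eval x}.ncard : ℤ)
    - ({x : ℝ | f.eval x = 0 ∧ g.eval x < 0}.ncard : ℤ)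

/-!
Divide the remainder sequence by its last term `h_m`, a gcd of `f` and `f'g`, to get
`H_0, …, H_m = 1`. Consecutive `H_i` have no common root, and at a root of an inner `H_{i+1}`
its two neighbours have opposite signs, so the number of sign changes of `(H_i(x))_i` is
locally constant except across roots of `H_0 = f / h_m`, which are the roots of `f` that are
not roots of `g`. Off the critical points `H_0 H_1` has the sign of `f f' g`, and `f f'` goes
from negative to positive across a root of `f`; so the count drops by one across a root of `f`
where `g > 0` and rises by one where `g < 0`. Summing these jumps between a point left of all
critical points and one right of them gives `ν(f, f'g) = N(f, g)`.
-/

open Polynomial Finset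
open scoped Classical

theorem pos_iff_pos_of_forall_ne_zero {φ : ℝ → ℝ} {s : Set ℝ} (hs : IsPreconnected s)
    (hφ : ContinuousOn φ s) (h0 : ∀ x ∈ s, φ x ≠ 0) {x y : ℝ} (hx : x ∈ s) (hy : y ∈ s) :
    0 < φ x ↔ 0 < φ y := by
  suffices key : ∀ u ∈ s, ∀ v ∈ s, 0 < φ u → 0 < φ v from ⟨key x hx y hy, key y hy x hx⟩
  intro u hu v hv hpos
  by_contra! hneg
  obtain ⟨z, hz, hz0⟩ := hs.intermediate_value hv hu hφ ⟨hneg, hpos.le⟩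
  exact h0 z hz hz0

theorem pos_iff_pos_iff_mul_pos {u v : ℝ} (hu : u ≠ 0) (hv : v ≠ 0) :
    (0 < u ↔ 0 < v) ↔ 0 < u * v := by
  rw [mul_pos_iff]
  rcases hu.lt_or_gt with hu | hu <;> rcases hv.lt_or_gt with hv | hv <;>
    simp [hu, hv, hu.not_gt, hv.not_gt]

theorem pos_iff_pos_of_sq_mul_eq {c u v : ℝ} (h : c ^ 2 * u = v) (hv : v ≠ 0) :
    0 < u ↔ 0 < v := by
  have hc : 0 < c ^ 2 := by
    rcases eq_or_ne c 0 with rfl | hc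
    · simp [← h] at hv
    · positivity
  rw [← h, mul_pos_iff_of_pos_left hc]

theorem ite_iff_add_ite_iff_of_iff_not {p q s : Prop} (h : p ↔ ¬ s) :
    ((if (p ↔ q) then 0 else 1 : ℤ) + if (q ↔ s) then 0 else 1) = 1 := by
  by_cases hq : q <;> by_cases hs : s <;> simp [h, hq, hs]

theorem sum_range_eq_ite_of_cancel_pairs {M : Type*} [AddCommMonoid M] {δ : ℕ → M}
    {Z : ℕ → Prop} {m : ℕ} (hm : ¬ Z m) (hadj : ∀ i < m, Z i → ¬ Z (i + 1))
    (hzero : ∀ i < m, ¬ Z i → ¬ Z (i + 1) → δ i = 0)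
    (hpair : ∀ i, i + 1 < m → Z (i + 1) → δ i + δ (i + 1) = 0) :
    ∑ i ∈ range m, δ i = if Z 0 then δ 0 else 0 := by
  suffices key : ∀ n ≤ m, ¬ Z n → ∑ i ∈ range n, δ i = if Z 0 then δ 0 else 0 from
    key m le_rfl hm
  intro n
  induction n using Nat.strong_induction_on with
  | _ n ih =>
    intro hn hZn
    match n with
    | 0 => simp [hZn]
    | 1 =>
      by_cases hZ0 : Z 0
      · simp [hZ0]
      · simp [hZ0, hzero 0 (by omega) hZ0 hZn]
    | k + 2 =>
      by_cases hZk : Z (k + 1)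
      · rw [sum_range_succ, sum_range_succ, add_assoc, hpair k (by omega) hZk, add_zero]
        exact ih k (by omega) (by omega) fun h => hadj k (by omega) h hZk
      · rw [sum_range_succ, hzero (k + 1) (by omega) hZk hZn, add_zero]
        exact ih (k + 1) (by omega) (by omega) hZk

theorem exists_gt_lt_forall_gt {α : Type*} [LinearOrder α] [DenselyOrdered α] (Z : Finset α)
    {r b : α} (hrb : r < b) : ∃ c, r < c ∧ c < b ∧ ∀ z ∈ Z, r < z → c < z := by
  set T := insert b {z ∈ Z | r < z}
  have hT : T.Nonempty := insert_nonempty _ _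
  have hr : r < T.min' hT := (lt_min'_iff T hT).mpr fun y hy =>
    (mem_insert.mp hy).elim (· ▸ hrb) fun hy => (mem_filter.mp hy).2
  obtain ⟨c, hrc, hcy⟩ := exists_between hr
  refine ⟨c, hrc, hcy.trans_le (T.min'_le b (mem_insert_self _ _)), fun z hz hrz => ?_⟩
  exact hcy.trans_le (T.min'_le z (mem_insert_of_mem (mem_filter.mpr ⟨hz, hrz⟩)))

theorem sub_eq_sum_of_local_jumps {α M : Type*} [LinearOrder α] [DenselyOrdered α]
    [AddCommGroup M] (Z : Finset α) (F J : α → M) (hJ : ∀ r ∉ Z, J r = 0)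
    (hloc : ∀ a r b, a < r → r < b → (∀ z ∈ Z, z ∈ Set.Icc a b → z = r) → F a - F b = J r)
    {a b : α} (hab : a < b) (ha : a ∉ Z) (hb : b ∉ Z) :
    F a - F b = ∑ z ∈ Z with z ∈ Set.Ioo a b, J z := by
  induction hn : #{z ∈ Z | z ∈ Set.Ioo a b} generalizing a with
  | zero =>
    obtain ⟨r, har, hrb⟩ := exists_between hab
    have hnone := filter_eq_empty_iff.mp (card_eq_zero.mp hn)
    rw [card_eq_zero.mp hn, sum_empty, hloc a r b har hrb, hJ r fun hr => hnone hr ⟨har, hrb⟩]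
    exact fun z hz hzI => absurd ⟨hzI.1.lt_of_ne (ne_of_mem_of_not_mem hz ha).symm,
      hzI.2.lt_of_ne (ne_of_mem_of_not_mem hz hb)⟩ (hnone hz)
  | succ n ih =>
    set S := {z ∈ Z | z ∈ Set.Ioo a b}
    have hS : S.Nonempty := card_pos.mp (by omega)
    set r := S.min' hS
    have hrS : r ∈ S := S.min'_mem hS
    obtain ⟨hrZ, har, hrb⟩ := mem_filter.mp hrS
    obtain ⟨c, hrc, hcb, hc⟩ := exists_gt_lt_forall_gt Z hrb
    have hS' : {z ∈ Z | z ∈ Set.Ioo c b} = S.erase r := by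
      ext z
      simp only [mem_filter, mem_erase, Set.mem_Ioo, S]
      constructor
      · rintro ⟨hz, hcz, hzb⟩
        exact ⟨(hrc.trans hcz).ne', hz, har.trans (hrc.trans hcz), hzb⟩
      · rintro ⟨hzr, hz, haz, hzb⟩
        exact ⟨hz, hc z hz ((S.min'_le z (mem_filter.mpr ⟨hz, haz, hzb⟩)).lt_of_ne' hzr), hzb⟩
    have hstep : F a - F c = J r := hloc a r c har hrc fun z hz hzI =>
      (S.min'_le z (mem_filter.mpr ⟨hz, hzI.1.lt_of_ne (ne_of_mem_of_not_mem hz ha).symm,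
        hzI.2.trans_lt hcb⟩)).eq_or_lt.elim Eq.symm fun h => absurd hzI.2 (hc z hz h).not_ge
    rw [← sub_add_sub_cancel _ (F c), hstep,
      ih hcb (fun hcZ => (hc c hcZ hrc).false) (by rw [hS', card_erase_of_mem hrS, hn]; rfl),
      hS', ← add_sum_erase S J hrS]

theorem pos_eval_iff_of_ne_zero_on_Icc {p : ℝ[X]} {a r b : ℝ} (har : a ≤ r) (hrb : r ≤ b)
    (hr : p.eval r ≠ 0) (h : ∀ x ∈ Set.Icc a b, x ≠ r → p.eval x ≠ 0) {x : ℝ}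
    (hx : x ∈ Set.Icc a b) : 0 < p.eval x ↔ 0 < p.eval r :=
  pos_iff_pos_of_forall_ne_zero isPreconnected_Icc p.continuousOn
    (fun y hy => (eq_or_ne y r).elim (· ▸ hr) (h y hy)) hx ⟨har, hrb⟩

theorem exists_eval_mul_derivative_eq_slope (f : ℝ[X]) {a b : ℝ} (hab : a < b) :
    ∃ c ∈ Set.Ioo a b,
      2 * (f * derivative f).eval c * (b - a) = f.eval b ^ 2 - f.eval a ^ 2 := by
  obtain ⟨c, hc, hslope⟩ := exists_deriv_eq_slope (fun x => (f ^ 2).eval x) hab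
    (f ^ 2).continuousOn (f ^ 2).differentiableOn
  rw [Polynomial.deriv, derivative_sq, eq_div_iff (sub_ne_zero.mpr hab.ne')] at hslope
  refine ⟨c, hc, ?_⟩
  simpa [eval_pow, mul_assoc] using hslope

theorem eval_mul_derivative_neg_and_pos_of_isRoot {f : ℝ[X]} {a r b : ℝ} (har : a < r)
    (hrb : r < b) (hr : f.IsRoot r)
    (h : ∀ x ∈ Set.Icc a b, x ≠ r → (f * derivative f).eval x ≠ 0) :
    (f * derivative f).eval a < 0 ∧ 0 < (f * derivative f).eval b := by
  have hsq : ∀ x ∈ Set.Icc a b, x ≠ r → 0 < f.eval x ^ 2 := fun x hx hxr => by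
    have : f.eval x ≠ 0 := fun h0 => h x hx hxr (by rw [eval_mul, h0, zero_mul])
    positivity
  have hF : ∀ s, ContinuousOn (fun x => (f * derivative f).eval x) s := fun s =>
    (f * derivative f).continuousOn
  obtain ⟨c, ⟨hrc, hcb⟩, hc⟩ := exists_eval_mul_derivative_eq_slope f hrb
  obtain ⟨c', ⟨hac', hc'r⟩, hc'⟩ := exists_eval_mul_derivative_eq_slope f har
  rw [hr.eq_zero] at hc hc'
  have hb := hsq b ⟨(har.trans hrb).le, le_rfl⟩ hrb.ne'
  have ha := hsq a ⟨le_rfl, (har.trans hrb).le⟩ har.ne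
  have hca : 0 < (f * derivative f).eval a ↔ 0 < (f * derivative f).eval c' :=
    pos_iff_pos_of_forall_ne_zero isPreconnected_Icc (hF _)
      (fun y hy => h y ⟨hy.1, hy.2.trans (hc'r.trans hrb).le⟩ (hy.2.trans_lt hc'r).ne)
      (Set.left_mem_Icc.mpr hac'.le) (Set.right_mem_Icc.mpr hac'.le)
  have hcb' : 0 < (f * derivative f).eval c ↔ 0 < (f * derivative f).eval b :=
    pos_iff_pos_of_forall_ne_zero isPreconnected_Icc (hF _)
      (fun y hy => h y ⟨(har.trans hrc).le.trans hy.1, hy.2⟩ (hrc.trans_le hy.1).ne')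
      (Set.left_mem_Icc.mpr hcb.le) (Set.right_mem_Icc.mpr hcb.le)
  refine ⟨lt_of_le_of_ne (not_lt.mp fun hpos => ?_) (h a ⟨le_rfl, (har.trans hrb).le⟩ har.ne),
    hcb'.mp (by nlinarith)⟩
  nlinarith [hca.mp hpos]

theorem isRoot_div_gcd_iff {K : Type*} [Field K] [CharZero K] {f g d : K[X]} (hf : f ≠ 0)
    (hdf : d ∣ f) (hdq : d ∣ derivative f * g)
    (hgcd : ∀ e, e ∣ f → e ∣ derivative f * g → e ∣ d) (x : K) :
    (f / d).IsRoot x ↔ f.IsRoot x ∧ ¬ g.IsRoot x := by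
  have hd : d ≠ 0 := fun h => hf (zero_dvd_iff.mp (h ▸ hdf))
  have hfd : d * (f / d) = f := EuclideanDomain.mul_div_cancel' hd hdf
  constructor
  · intro hx
    have hfx : f.IsRoot x := by rw [IsRoot, ← hfd, eval_mul, hx.eq_zero, mul_zero]
    refine ⟨hfx, fun hgx => ?_⟩
    set μ := f.rootMultiplicity x
    have hμ : 1 ≤ μ := (rootMultiplicity_pos hf).mpr hfx
    have hderiv : (X - C x) ^ (μ - 1) ∣ derivative f := by
      rw [← derivative_rootMultiplicity_of_root hfx]; exact pow_rootMultiplicity_dvd _ x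
    have hq : (X - C x) ^ μ ∣ derivative f * g := by
      rw [show μ = μ - 1 + 1 by omega, pow_succ]
      exact mul_dvd_mul hderiv (dvd_iff_isRoot.mpr hgx)
    have hdvd : (X - C x) ^ (μ + 1) ∣ f := by
      rw [pow_succ, ← hfd]
      exact mul_dvd_mul (hgcd _ (pow_rootMultiplicity_dvd f x) hq) (dvd_iff_isRoot.mpr hx)
    have := (le_rootMultiplicity_iff hf).mpr hdvd
    omega
  · rintro ⟨hfx, hgx⟩
    have hf' : derivative f ≠ 0 := fun h => by
      have hC := eq_C_of_natDegree_eq_zero (derivative_eq_zero.mp h)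
      rw [IsRoot, hC, eval_C] at hfx
      exact hf (by rw [hC, hfx, C_0])
    have hq : derivative f * g ≠ 0 := mul_ne_zero hf' fun h => hgx (by simp [h])
    have hμq : (derivative f * g).rootMultiplicity x = f.rootMultiplicity x - 1 := by
      rw [rootMultiplicity_mul hq, derivative_rootMultiplicity_of_root hfx,
        rootMultiplicity_eq_zero hgx, add_zero]
    have hμd : d.rootMultiplicity x ≤ f.rootMultiplicity x - 1 :=
      hμq ▸ rootMultiplicity_le_rootMultiplicity_of_dvd hq hdq x
    have hμf : d.rootMultiplicity x + (f / d).rootMultiplicity x = f.rootMultiplicity x := by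
      rw [← rootMultiplicity_mul (by rwa [hfd]), hfd]
    have hμ : 1 ≤ f.rootMultiplicity x := (rootMultiplicity_pos hf).mpr hfx
    exact (rootMultiplicity_pos (fun h => hf (by rw [← hfd, h, mul_zero]))).mp (by omega)

section SturmAux

variable (p q : ℝ[X])

theorem sturmAux_add_sturmAux (k : ℕ) :
    sturmAux p q k + sturmAux p q (k + 2)
      = sturmAux p q (k + 1) * (sturmAux p q k / sturmAux p q (k + 1)) := by
  have h := EuclideanDomain.div_add_mod (sturmAux p q k) (sturmAux p q (k + 1))
  rw [sturmAux]
  linear_combination -h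

theorem dvd_sturmAux_and_iff (e : ℝ[X]) (k : ℕ) :
    e ∣ sturmAux p q k ∧ e ∣ sturmAux p q (k + 1)
      ↔ e ∣ sturmAux p q (k + 1) ∧ e ∣ sturmAux p q (k + 2) := by
  have hsum : e ∣ sturmAux p q (k + 1) → e ∣ sturmAux p q k + sturmAux p q (k + 2) :=
    fun h => sturmAux_add_sturmAux p q k ▸ h.mul_right _
  constructor
  · rintro ⟨hk, hk1⟩
    exact ⟨hk1, (dvd_add_right hk).mp (hsum hk1)⟩
  · rintro ⟨hk1, hk2⟩
    exact ⟨(dvd_add_left hk2).mp (hsum hk1), hk1⟩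

theorem dvd_sturmAux_of_dvd_of_dvd {e : ℝ[X]} {k m : ℕ} (hkm : k < m)
    (hk : e ∣ sturmAux p q k) (hk1 : e ∣ sturmAux p q (k + 1)) : e ∣ sturmAux p q m := by
  have key : ∀ n, k ≤ n → e ∣ sturmAux p q n ∧ e ∣ sturmAux p q (n + 1) :=
    Nat.le_induction ⟨hk, hk1⟩ fun n _ ih => (dvd_sturmAux_and_iff p q e n).mp ih
  exact (key m hkm.le).1

theorem sturmAux_dvd_of_dvd_pred {m : ℕ} (hm : 1 ≤ m)
    (hstop : sturmAux p q m ∣ sturmAux p q (m - 1)) {k : ℕ} (hkm : k ≤ m) :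
    sturmAux p q m ∣ sturmAux p q k := by
  obtain ⟨n, rfl⟩ : ∃ n, m = n + 1 := ⟨m - 1, by omega⟩
  have hzero : sturmAux p q (n + 2) = 0 := by
    rw [sturmAux, EuclideanDomain.mod_eq_zero.mpr (by simpa using hstop), neg_zero]
  have key : ∀ j (hj : j ≤ n + 1), sturmAux p q (n + 1) ∣ sturmAux p q j ∧
      sturmAux p q (n + 1) ∣ sturmAux p q (j + 1) :=
    fun j hj => Nat.decreasingInduction (fun i _ ih => (dvd_sturmAux_and_iff p q _ i).mpr ih)
      ⟨dvd_rfl, hzero ▸ dvd_zero _⟩ hj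
  exact (key k hkm).1

theorem sturmAux_ne_zero (hp : p ≠ 0) (hq : q ≠ 0) {m : ℕ}
    (hmin : ∀ k, 1 ≤ k → k < m → ¬ sturmAux p q k ∣ sturmAux p q (k - 1)) :
    ∀ k ≤ m, sturmAux p q k ≠ 0
  | 0, _ => hp
  | 1, _ => hq
  | k + 2, hk => fun h0 => hmin (k + 1) (by omega) (by omega) <| by
    rw [sturmAux, neg_eq_zero, EuclideanDomain.mod_eq_zero] at h0
    exact h0

end SturmAux

structure IsSturmChain (f g : ℝ[X]) (H : ℕ → ℝ[X]) (m : ℕ) : Prop where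
  ne_zero : ∀ i ≤ m, H i ≠ 0
  eq_one : H m = 1
  not_isRoot_succ : ∀ i < m, ∀ x, (H i).IsRoot x → ¬ (H (i + 1)).IsRoot x
  eval_eq_neg : ∀ i, i + 1 < m → ∀ x, (H (i + 1)).IsRoot x → (H i).eval x = -(H (i + 2)).eval x
  isRoot_zero_iff : ∀ x, (H 0).IsRoot x ↔ f.IsRoot x ∧ ¬ g.IsRoot x
  exists_sq_mul_eq : ∃ d : ℝ[X], d ^ 2 * (H 0 * H 1) = f * (derivative f * g)

theorem isSturmChain_sturmAux_div {f g : ℝ[X]} (hf : f ≠ 0) (hq : derivative f * g ≠ 0)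
    {m : ℕ} (hm : 1 ≤ m)
    (hstop : sturmAux f (derivative f * g) m ∣ sturmAux f (derivative f * g) (m - 1))
    (hmin : ∀ k, 1 ≤ k → k < m →
      ¬ sturmAux f (derivative f * g) k ∣ sturmAux f (derivative f * g) (k - 1)) :
    IsSturmChain f g
      (fun i => sturmAux f (derivative f * g) i / sturmAux f (derivative f * g) m) m := by
  set q := derivative f * g
  have hne := sturmAux_ne_zero f q hf hq hmin
  have hd : sturmAux f q m ≠ 0 := hne m le_rfl
  have hdvd : ∀ k ≤ m, sturmAux f q m ∣ sturmAux f q k := fun k =>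
    sturmAux_dvd_of_dvd_pred f q hm hstop
  have hmul : ∀ k ≤ m, sturmAux f q m * (sturmAux f q k / sturmAux f q m) = sturmAux f q k :=
    fun k hk => EuclideanDomain.mul_div_cancel' hd (hdvd k hk)
  refine ⟨fun i hi h0 => hne i hi (by rw [← hmul i hi, h0, mul_zero]),
    EuclideanDomain.div_self hd, fun i hi x hi0 hi1 => ?_, fun i hi x hx => ?_,
    isRoot_div_gcd_iff hf (hdvd 0 (Nat.zero_le m)) (hdvd 1 hm)
      fun e => dvd_sturmAux_of_dvd_of_dvd f q hm, ⟨sturmAux f q m, ?_⟩⟩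
  · -- a common root `x` would make `sturmAux f q m * (X - C x)` divide `sturmAux f q m`
    have hx : sturmAux f q m * (X - C x) ∣ sturmAux f q m * 1 := by
      rw [mul_one]
      refine dvd_sturmAux_of_dvd_of_dvd f q hi ?_ ?_
      · exact hmul i hi.le ▸ mul_dvd_mul_left _ (dvd_iff_isRoot.mpr hi0)
      · exact hmul (i + 1) hi ▸ mul_dvd_mul_left _ (dvd_iff_isRoot.mpr hi1)
    exact not_isUnit_X_sub_C x (isUnit_of_dvd_one ((mul_dvd_mul_iff_left hd).mp hx))
  · have hrel := sturmAux_add_sturmAux f q i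
    rw [← hmul i (by omega), ← hmul (i + 1) (by omega), ← hmul (i + 2) hi, ← mul_add,
      mul_assoc] at hrel
    have := congrArg (eval x) (mul_left_cancel₀ hd hrel)
    rw [eval_add, eval_mul, hx.eq_zero, zero_mul] at this
    linear_combination this
  · calc _ = (sturmAux f q m * (sturmAux f q 0 / sturmAux f q m)) *
          (sturmAux f q m * (sturmAux f q 1 / sturmAux f q m)) := by ring
      _ = f * q := by rw [hmul 0 (Nat.zero_le m), hmul 1 hm]; rfl

theorem signChanges_eq_sum (S : ℕ → ℝ[X]) (m : ℕ) (σ : ℝ[X] → Prop) :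
    (signChanges S m σ : ℤ) = ∑ i ∈ range m, if (σ (S i) ↔ σ (S (i + 1))) then 0 else 1 := by
  have hset : {i : ℕ | i < m ∧ ¬ (σ (S i) ↔ σ (S (i + 1)))}
      = ↑{i ∈ range m | ¬ (σ (S i) ↔ σ (S (i + 1)))} := by
    ext i; simp
  rw [signChanges, hset, Set.ncard_coe_finset, card_filter]
  push_cast
  simp only [ite_not]

theorem signChanges_congr {S : ℕ → ℝ[X]} {m : ℕ} {σ τ : ℝ[X] → Prop}
    (h : ∀ i ≤ m, σ (S i) ↔ τ (S i)) : signChanges S m σ = signChanges S m τ := by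
  unfold signChanges
  congr 1
  ext i
  simp only [Set.mem_ofPred_eq, and_congr_right_iff]
  intro hi
  rw [h i hi.le, h (i + 1) hi]

theorem sigmaBot_iff {p : ℝ[X]} {A : ℝ} (h : ∀ x ≤ A, p.eval x ≠ 0) :
    sigmaBot p ↔ 0 < p.eval A := by
  have hsign : ∀ x ≤ A, 0 < p.eval x ↔ 0 < p.eval A := fun x hx =>
    pos_iff_pos_of_forall_ne_zero isPreconnected_Iic p.continuousOn h hx (Set.mem_Iic.mpr le_rfl)
  constructor
  · intro hs
    obtain ⟨x, hx, hxA⟩ := (hs.and (Filter.eventually_le_atBot A)).exists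
    exact (hsign x hxA).mp hx
  · intro hA
    filter_upwards [Filter.eventually_le_atBot A] with x hx using (hsign x hx).mpr hA

theorem sigmaTop_iff {p : ℝ[X]} {B : ℝ} (h : ∀ x ≥ B, p.eval x ≠ 0) :
    sigmaTop p ↔ 0 < p.eval B := by
  have hsign : ∀ x ≥ B, 0 < p.eval x ↔ 0 < p.eval B := fun x hx =>
    pos_iff_pos_of_forall_ne_zero isPreconnected_Ici p.continuousOn h hx (Set.mem_Ici.mpr le_rfl)
  constructor
  · intro hs
    obtain ⟨x, hx, hxB⟩ := (hs.and (Filter.eventually_ge_atTop B)).exists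
    exact (hsign x hxB).mp hx
  · intro hB
    filter_upwards [Filter.eventually_ge_atTop B] with x hx using (hsign x hx).mpr hB

noncomputable def signChangesAt (H : ℕ → ℝ[X]) (m : ℕ) (x : ℝ) : ℕ :=
  signChanges H m fun p => 0 < p.eval x

noncomputable def criticalPoly (f g : ℝ[X]) (H : ℕ → ℝ[X]) (m : ℕ) : ℝ[X] :=
  f * derivative f * g * ∏ i ∈ range (m + 1), H i

noncomputable def rootSign (f g : ℝ[X]) (x : ℝ) : ℤ :=
  (if f.eval x = 0 ∧ 0 < g.eval x then 1 else 0) - (if f.eval x = 0 ∧ g.eval x < 0 then 1 else 0)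

theorem rootSign_eq_zero {f g : ℝ[X]} {x : ℝ} (hx : f.eval x ≠ 0) : rootSign f g x = 0 := by
  simp [rootSign, hx]

theorem sum_rootSign_eq_sturmN {f g : ℝ[X]} {Z : Finset ℝ} (hZ : ∀ x, f.eval x = 0 → x ∈ Z) :
    ∑ z ∈ Z, rootSign f g z = sturmN f g := by
  have hset : ∀ p : ℝ → Prop, {x | f.eval x = 0 ∧ p x} = ↑{x ∈ Z | f.eval x = 0 ∧ p x} :=
    fun p => by ext x; simpa using fun hx _ => hZ x hx
  simp only [rootSign, sum_sub_distrib, sum_boole, sturmN, hset, Set.ncard_coe_finset]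

theorem eval_criticalPoly_ne_zero_iff {f g : ℝ[X]} {H : ℕ → ℝ[X]} {m : ℕ} {x : ℝ} :
    (criticalPoly f g H m).eval x ≠ 0 ↔
      (f * derivative f).eval x ≠ 0 ∧ g.eval x ≠ 0 ∧ ∀ i ≤ m, (H i).eval x ≠ 0 := by
  simp [criticalPoly, eval_prod, prod_eq_zero_iff, and_assoc]

theorem signChanges_sigmaBot_eq_signChangesAt {H : ℕ → ℝ[X]} {m : ℕ} {A : ℝ}
    (h : ∀ x ≤ A, ∀ i ≤ m, (H i).eval x ≠ 0) :
    signChanges H m sigmaBot = signChangesAt H m A :=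
  signChanges_congr fun i hi => sigmaBot_iff fun x hx => h x hx i hi

theorem signChanges_sigmaTop_eq_signChangesAt {H : ℕ → ℝ[X]} {m : ℕ} {B : ℝ}
    (h : ∀ x ≥ B, ∀ i ≤ m, (H i).eval x ≠ 0) :
    signChanges H m sigmaTop = signChangesAt H m B :=
  signChanges_congr fun i hi => sigmaTop_iff fun x hx => h x hx i hi

theorem exists_lt_forall_isRoot_mem_Ioo {P : ℝ[X]} (hP : P ≠ 0) :
    ∃ A B, A < B ∧ ∀ x, P.IsRoot x → x ∈ Set.Ioo A B := by
  have hfin := Filter.eventually_all_finset (l := Filter.atBot) P.roots.toFinset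
    (p := fun z A => A < z)
  obtain ⟨A, hA⟩ := (hfin.2 fun z _ => Filter.eventually_lt_atBot z).exists
  obtain ⟨B, hAB, hB⟩ := ((Filter.eventually_gt_atTop A).and
    ((Filter.eventually_all_finset _).2 fun z _ => Filter.eventually_gt_atTop z)).exists
  refine ⟨A, B, hAB, fun x hx => ?_⟩
  have hx' : x ∈ P.roots.toFinset := by simpa [hP] using hx
  exact ⟨hA x hx', hB x hx'⟩

namespace IsSturmChain

variable {f g : ℝ[X]} {H : ℕ → ℝ[X]} {m : ℕ}

theorem signChange_zero_sub_eq_rootSign (hH : IsSturmChain f g H m) {a r b : ℝ} (har : a < r)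
    (hrb : r < b) (hr : (H 0).IsRoot r)
    (hreg : ∀ x ∈ Set.Icc a b, x ≠ r → (criticalPoly f g H m).eval x ≠ 0) :
    ((if (0 < (H 0).eval a ↔ 0 < (H 1).eval a) then 0 else 1 : ℤ)
      - if (0 < (H 0).eval b ↔ 0 < (H 1).eval b) then 0 else 1) = rootSign f g r := by
  obtain ⟨hfr, hgr⟩ := (hH.isRoot_zero_iff r).mp hr
  have hm : 1 ≤ m := Nat.one_le_iff_ne_zero.mpr fun h0 => by
    have h1 := hH.eq_one
    subst h0
    simp [h1] at hr
  obtain ⟨d, hd⟩ := hH.exists_sq_mul_eq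
  have hreg' := fun x hx hxr => eval_criticalPoly_ne_zero_iff.mp (hreg x hx hxr)
  have hab : a ≤ b := (har.trans hrb).le
  obtain ⟨hffa, hffb⟩ := eval_mul_derivative_neg_and_pos_of_isRoot har hrb hfr
    fun x hx hxr => (hreg' x hx hxr).1
  have hchange : ∀ x ∈ Set.Icc a b, x ≠ r → ((0 < (H 0).eval x ↔ 0 < (H 1).eval x) ↔
      0 < (f * derivative f).eval x * g.eval x) := by
    intro x hx hxr
    obtain ⟨hff, hgx, hHx⟩ := hreg' x hx hxr
    have hdx : d.eval x ^ 2 * ((H 0).eval x * (H 1).eval x)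
        = (f * derivative f).eval x * g.eval x := by
      simpa only [eval_mul, eval_pow, mul_assoc] using congrArg (eval x) hd
    rw [pos_iff_pos_iff_mul_pos (hHx 0 (Nat.zero_le _)) (hHx 1 hm),
      pos_iff_pos_of_sq_mul_eq hdx (mul_ne_zero hff hgx)]
  have hga := (pos_eval_iff_of_ne_zero_on_Icc har.le hrb.le hgr
    (fun x hx hxr => (hreg' x hx hxr).2.1) ⟨le_rfl, hab⟩)
  have hgb := (pos_eval_iff_of_ne_zero_on_Icc har.le hrb.le hgr
    (fun x hx hxr => (hreg' x hx hxr).2.1) ⟨hab, le_rfl⟩)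
  have hga0 := (hreg' a ⟨le_rfl, hab⟩ har.ne).2.1
  have hgb0 := (hreg' b ⟨hab, le_rfl⟩ hrb.ne').2.1
  simp only [hchange a ⟨le_rfl, hab⟩ har.ne, hchange b ⟨hab, le_rfl⟩ hrb.ne', rootSign,
    hfr.eq_zero, true_and]
  rcases (show g.eval r ≠ 0 from hgr).lt_or_gt with hneg | hpos
  · have hga' : g.eval a < 0 := lt_of_le_of_ne (not_lt.mp fun h => hneg.not_gt (hga.mp h)) hga0
    have hgb' : g.eval b < 0 := lt_of_le_of_ne (not_lt.mp fun h => hneg.not_gt (hgb.mp h)) hgb0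
    rw [if_pos (mul_pos_of_neg_of_neg hffa hga'), if_neg (mul_neg_of_pos_of_neg hffb hgb').not_gt,
      if_neg hneg.not_gt, if_pos hneg]
  · rw [if_neg (mul_neg_of_neg_of_pos hffa (hga.mpr hpos)).not_gt,
      if_pos (mul_pos hffb (hgb.mpr hpos)), if_pos hpos, if_neg hpos.not_gt]

theorem signChangesAt_sub_signChangesAt (hH : IsSturmChain f g H m) {a r b : ℝ} (har : a < r)
    (hrb : r < b) (hreg : ∀ x ∈ Set.Icc a b, x ≠ r → (criticalPoly f g H m).eval x ≠ 0) :
    (signChangesAt H m a : ℤ) - signChangesAt H m b = rootSign f g r := by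
  have hab : a ≤ b := (har.trans hrb).le
  have ha : a ∈ Set.Icc a b := ⟨le_rfl, hab⟩
  have hb : b ∈ Set.Icc a b := ⟨hab, le_rfl⟩
  have hsign : ∀ i ≤ m, ¬ (H i).IsRoot r → ∀ x ∈ Set.Icc a b,
      (0 < (H i).eval x ↔ 0 < (H i).eval r) := fun i hi hr x hx =>
    pos_eval_iff_of_ne_zero_on_Icc har.le hrb.le hr
      (fun y hy hyr => (eval_criticalPoly_ne_zero_iff.mp (hreg y hy hyr)).2.2 i hi) hx
  rw [signChangesAt, signChangesAt, signChanges_eq_sum, signChanges_eq_sum, ← sum_sub_distrib,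
    sum_range_eq_ite_of_cancel_pairs (Z := fun i => (H i).IsRoot r) (by simp [hH.eq_one])
      (fun i hi => hH.not_isRoot_succ i hi r) ?_ ?_]
  · by_cases h0 : (H 0).IsRoot r
    · rw [if_pos h0]
      exact hH.signChange_zero_sub_eq_rootSign har hrb h0 hreg
    · rw [if_neg h0]
      have h0' : ¬ (f.eval r = 0 ∧ g.eval r ≠ 0) := fun h => h0 ((hH.isRoot_zero_iff r).mpr h)
      rw [rootSign, if_neg fun h => h0' ⟨h.1, h.2.ne'⟩, if_neg fun h => h0' ⟨h.1, h.2.ne⟩,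
        sub_zero]
  · intro i hi h0 h1
    simp only [hsign i hi.le h0 a ha, hsign i hi.le h0 b hb, hsign (i + 1) hi h1 a ha,
      hsign (i + 1) hi h1 b hb, sub_self]
  · intro i hi h1
    have h0 : ¬ (H i).IsRoot r := fun h => hH.not_isRoot_succ i (by omega) r h h1
    have h2 : (H (i + 2)).eval r ≠ 0 := hH.not_isRoot_succ (i + 1) hi r h1
    have hflip : ∀ x ∈ Set.Icc a b, (0 < (H i).eval x ↔ ¬ 0 < (H (i + 2)).eval x) := by
      intro x hx
      rw [hsign i (by omega) h0 x hx, hsign (i + 2) hi h2 x hx, hH.eval_eq_neg i hi r h1, neg_pos,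
        not_lt, h2.le_iff_lt]
    linear_combination ite_iff_add_ite_iff_of_iff_not (hflip a ha)
      - ite_iff_add_ite_iff_of_iff_not (hflip b hb)

theorem criticalPoly_ne_zero (hH : IsSturmChain f g H m) (hf : f ≠ 0) (hf' : derivative f ≠ 0)
    (hg : g ≠ 0) : criticalPoly f g H m ≠ 0 := by
  simpa [criticalPoly, hf, hf', hg, prod_eq_zero_iff, Nat.lt_succ_iff] using hH.ne_zero

theorem signChangesAt_sub_signChangesAt_eq_sturmN (hH : IsSturmChain f g H m)
    (hP : criticalPoly f g H m ≠ 0) {A B : ℝ} (hAB : A < B)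
    (hroots : ∀ x, (criticalPoly f g H m).IsRoot x → x ∈ Set.Ioo A B) :
    (signChangesAt H m A : ℤ) - signChangesAt H m B = sturmN f g := by
  set Z := (criticalPoly f g H m).roots.toFinset
  have hZ : ∀ x ∉ Z, (criticalPoly f g H m).eval x ≠ 0 := by simp [Z, hP]
  have hfZ : ∀ x ∉ Z, f.eval x ≠ 0 := fun x hx h0 =>
    (eval_criticalPoly_ne_zero_iff.mp (hZ x hx)).1 (by rw [eval_mul, h0, zero_mul])
  have hAB' : ∀ z ∈ Z, z ∈ Set.Ioo A B := fun z hz => hroots z (by simpa [Z, hP] using hz)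
  calc (signChangesAt H m A : ℤ) - signChangesAt H m B
      = ∑ z ∈ Z with z ∈ Set.Ioo A B, rootSign f g z :=
        sub_eq_sum_of_local_jumps Z _ _ (fun r hr => rootSign_eq_zero (hfZ r hr))
          (fun a r b har hrb hloc => hH.signChangesAt_sub_signChangesAt har hrb
            fun x hx hxr => hZ x fun hxZ => hxr (hloc x hxZ hx))
          hAB (fun h => (hAB' A h).1.false) (fun h => (hAB' B h).2.false)
    _ = ∑ z ∈ Z, rootSign f g z := by rw [filter_true_of_mem hAB']
    _ = sturmN f g := sum_rootSign_eq_sturmN fun x hx => by_contra fun hxZ => hfZ x hxZ hx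

end IsSturmChain

theorem sturm_tarski_general (f g : Polynomial ℝ) (hg : g ≠ 0)
    (hfc : 1 ≤ f.natDegree) (m : ℕ) (hm : 1 ≤ m)
    (hstop : sturmAux f (Polynomial.derivative f * g) m ∣
      sturmAux f (Polynomial.derivative f * g) (m - 1))
    (hmin : ∀ k, 1 ≤ k → k < m →
      ¬ sturmAux f (Polynomial.derivative f * g) k ∣
        sturmAux f (Polynomial.derivative f * g) (k - 1)) :
    sturmNu f (Polynomial.derivative f * g) m = sturmN f g := by
  have hf : f ≠ 0 := ne_zero_of_natDegree_gt hfc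
  have hf' : derivative f ≠ 0 := fun h => by rw [derivative_eq_zero] at h; omega
  have hH := isSturmChain_sturmAux_div hf (mul_ne_zero hf' hg) hm hstop hmin
  set H := fun i => sturmAux f (derivative f * g) i / sturmAux f (derivative f * g) m
  have hP := hH.criticalPoly_ne_zero hf hf' hg
  obtain ⟨A, B, hAB, hroots⟩ := exists_lt_forall_isRoot_mem_Ioo hP
  have hreg : ∀ x ∉ Set.Ioo A B, ∀ i ≤ m, (H i).eval x ≠ 0 := fun x hx =>
    (eval_criticalPoly_ne_zero_iff.mp fun h0 => hx (hroots x h0)).2.2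
  rw [sturmNu, signChanges_sigmaBot_eq_signChangesAt fun x hx => hreg x fun h => hx.not_gt h.1,
    signChanges_sigmaTop_eq_signChangesAt fun x hx => hreg x fun h => hx.not_gt h.2]
  exact hH.signChangesAt_sub_signChangesAt_eq_sturmN hP hAB hroots

/-- Sturm–Tarski / generalized Sturm theorem: for nonzero `f g ∈ ℝ[X]`
with `f` nonconstant (so `f'·g ≠ 0`), one has `ν(f, f'·g) = N(f, g)`, where `m` is the
stopping index of the canonical sequence for `f` and `f'·g` (the first index `m ≥ 1`
with `h_m ∣ h_{m−1}`). -/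
theorem sturm_tarski (f g : Polynomial ℝ) (hf : f ≠ 0) (hg : g ≠ 0)
    (hfc : 1 ≤ f.natDegree) (m : ℕ) (hm : 1 ≤ m)
    (hstop : sturmAux f (Polynomial.derivative f * g) m ∣
      sturmAux f (Polynomial.derivative f * g) (m - 1))
    (hmin : ∀ k, 1 ≤ k → k < m →
      ¬ sturmAux f (Polynomial.derivative f * g) k ∣
        sturmAux f (Polynomial.derivative f * g) (k - 1)) :
    sturmNu f (Polynomial.derivative f * g) m = sturmN f g :=
  sturm_tarski_general f g hg hfc m hm hstop hmin
end

section
/- Let f, p, q ∈ ℝ[X] be nonzero polynomials and let S(f,p,q) = {x ∈ ℝ | f(x) = 0 ∧ p(x) > 0 ∧ q(x) > 0} (a finite set since f ≠ 0). Then 4·|S(f,p,q)| = N(f, p²·q²) + N(f, p²·q) + N(f, p·q²) + N(f, p·q), as an identity of integers. -/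
open Polynomial Finset

private lemma set_eq_filter (f : Polynomial ℝ) (hf : f ≠ 0) (P : ℝ → Prop) [DecidablePred P] :
    {x : ℝ | f.eval x = 0 ∧ P x} = ↑(f.roots.toFinset.filter P) := by
  ext x
  simp [Polynomial.mem_roots, hf, Polynomial.IsRoot]

private lemma sturmN_eq_sum (f g : Polynomial ℝ) (hf : f ≠ 0) :
    sturmN f g = ∑ x ∈ f.roots.toFinset,
      ((if 0 < g.eval x then (1 : ℤ) else 0) - (if g.eval x < 0 then (1 : ℤ) else 0)) := by
  classical
  rw [sturmN, set_eq_filter f hf, set_eq_filter f hf, Set.ncard_coe_finset,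
    Set.ncard_coe_finset, Finset.sum_sub_distrib, Finset.card_filter, Finset.card_filter]
  push_cast [apply_ite (fun n : ℕ => (n : ℤ))]
  ring

private lemma key (a b : ℝ) :
    4 * (if 0 < a ∧ 0 < b then (1 : ℤ) else 0)
      = ((if 0 < a ^ 2 * b ^ 2 then (1 : ℤ) else 0) - (if a ^ 2 * b ^ 2 < 0 then (1 : ℤ) else 0))
        + ((if 0 < a ^ 2 * b then (1 : ℤ) else 0) - (if a ^ 2 * b < 0 then (1 : ℤ) else 0))
        + ((if 0 < a * b ^ 2 then (1 : ℤ) else 0) - (if a * b ^ 2 < 0 then (1 : ℤ) else 0))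
        + ((if 0 < a * b then (1 : ℤ) else 0) - (if a * b < 0 then (1 : ℤ) else 0)) := by
  rcases lt_trichotomy a 0 with ha | ha | ha <;>
    rcases lt_trichotomy b 0 with hb | hb | hb
  · have h1 : 0 < a ^ 2 * b ^ 2 := mul_pos (by nlinarith) (by nlinarith)
    have h2 : a ^ 2 * b < 0 := by nlinarith
    have h3 : a * b ^ 2 < 0 := by nlinarith
    have h4 : 0 < a * b := by nlinarith
    simp [h1, h2, h3, h4, asymm h1, asymm h2, asymm h3, asymm h4, ha.not_gt]
  · subst hb; norm_num [ha.not_gt]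
  · have h1 : 0 < a ^ 2 * b ^ 2 := mul_pos (by nlinarith) (by nlinarith)
    have h2 : 0 < a ^ 2 * b := by nlinarith
    have h3 : a * b ^ 2 < 0 := by nlinarith
    have h4 : a * b < 0 := by nlinarith
    simp [h1, h2, h3, h4, asymm h1, asymm h2, asymm h3, asymm h4, ha.not_gt]
  · subst ha; norm_num [hb.not_gt]
  · subst ha; norm_num
  · subst ha; norm_num
  · have h1 : 0 < a ^ 2 * b ^ 2 := mul_pos (by nlinarith) (by nlinarith)
    have h2 : a ^ 2 * b < 0 := by nlinarith
    have h3 : 0 < a * b ^ 2 := by nlinarith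
    have h4 : a * b < 0 := by nlinarith
    simp [h1, h2, h3, h4, asymm h1, asymm h2, asymm h3, asymm h4, hb.not_gt]
  · subst hb; norm_num
  · have h1 : 0 < a ^ 2 * b ^ 2 := mul_pos (by nlinarith) (by nlinarith)
    have h2 : 0 < a ^ 2 * b := by positivity
    have h3 : 0 < a * b ^ 2 := by positivity
    have h4 : 0 < a * b := by positivity
    simp [h1, h2, h3, h4, asymm h1, asymm h2, asymm h3, asymm h4, ha, hb]

/-- For nonzero `f p q ∈ ℝ[X]`, with
`S(f,p,q) = {x ∈ ℝ | f(x) = 0 ∧ p(x) > 0 ∧ q(x) > 0}`, one has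
`4·|S(f,p,q)| = N(f,p²q²) + N(f,p²q) + N(f,pq²) + N(f,pq)`. -/
theorem card_pos_set_eq_sum_sturmN (f p q : Polynomial ℝ)
    (hf : f ≠ 0) (hp : p ≠ 0) (hq : q ≠ 0) :
    4 * ({x : ℝ | f.eval x = 0 ∧ 0 < p.eval x ∧ 0 < q.eval x}.ncard : ℤ)
      = sturmN f (p ^ 2 * q ^ 2) + sturmN f (p ^ 2 * q)
        + sturmN f (p * q ^ 2) + sturmN f (p * q) := by
  classical
  rw [set_eq_filter f hf, Set.ncard_coe_finset, sturmN_eq_sum f _ hf, sturmN_eq_sum f _ hf,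
    sturmN_eq_sum f _ hf, sturmN_eq_sum f _ hf, ← Finset.sum_add_distrib,
    ← Finset.sum_add_distrib, ← Finset.sum_add_distrib, Finset.card_filter]
  push_cast [apply_ite (fun n : ℕ => (n : ℤ))]
  rw [Finset.mul_sum]
  refine Finset.sum_congr rfl fun x _ => ?_
  simp only [Polynomial.eval_mul, Polynomial.eval_pow]
  exact key (p.eval x) (q.eval x)
end
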